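/- The Coxeter graph Γ is a tightly fastened {C_7}_{P_3}-UH graph: for every 7-cycle C₀ of Γ and every 2-path M₀ (path on 3 vertices) contained in C₀, there exists exactly one 7-cycle C₁ ≠ C₀ of Γ such that the intersection of C₀ and C₁ (both on vertex sets and on edge sets) is exactly M₀. -/

import Mathlib

/-- Vertex set of the Coxeter graph: four concentric 7-tuples `u, v, t, z`. -/
abbrev CoxeterVertex := Fin 4 × ZMod 7

/-- Base (asymmetric) adjacency relation for the Coxeter graph:
`u_x ~ u_{x+1}`, `v_x ~ v_{x+2}`, `t_x ~ t_{x+3}`, and `z_x ~ u_x, v_x, t_x`. -/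
def coxeterRel : CoxeterVertex → CoxeterVertex → Prop := fun p q =>
  (p.1 = 0 ∧ q.1 = 0 ∧ q.2 = p.2 + 1) ∨
  (p.1 = 1 ∧ q.1 = 1 ∧ q.2 = p.2 + 2) ∨
  (p.1 = 2 ∧ q.1 = 2 ∧ q.2 = p.2 + 3) ∨
  (p.1 = 3 ∧ (q.1 = 0 ∨ q.1 = 1 ∨ q.1 = 2) ∧ q.2 = p.2)

/-- The Coxeter graph on 28 vertices. -/
def coxeterGraph : SimpleGraph CoxeterVertex := SimpleGraph.fromRel coxeterRel

/-- A 7-cycle of a graph `G` is a subgraph of `G` isomorphic to the cycle graph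
on 7 vertices. -/
def IsSevenCycle {V : Type*} {G : SimpleGraph V} (H : G.Subgraph) : Prop :=
  Nonempty (H.coe ≃g SimpleGraph.cycleGraph 7)

/-- The path subgraph `u – v – w` determined by two incident edges. -/
def twoPathSubgraph {V : Type*} {G : SimpleGraph V} {u v w : V}
    (h₁ : G.Adj u v) (h₂ : G.Adj v w) : G.Subgraph :=
  G.subgraphOfAdj h₁ ⊔ G.subgraphOfAdj h₂

/-!
The Coxeter graph has girth 7, so every closed walk of length 7 in it traverses a heptagon, and a
depth-first search over these walks shows that the 24 heptagons of `coxeterHeptagons` are all of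
its 7-cycles. Whether a second heptagon meets a heptagon `t` exactly in the 2-path at position `j`
of `t` only depends on which vertices and edges of `t` it contains, so the theorem reduces to a
finite check over the 24 · 7 pairs `(t, j)`: each time exactly one heptagon qualifies.
-/

section CycleTuples

variable {V : Type*} {m n : ℕ}

theorem Set.range_inter_eq_image_iff {ι α : Type*} {φ : ι → α} (hφ : φ.Injective) {A : Set α}
    {S : Set ι} : Set.range φ ∩ A = φ '' S ↔ ∀ i, φ i ∈ A ↔ i ∈ S := by
  constructor
  · intro h i
    rw [← hφ.mem_set_image, ← h]
    exact ⟨fun hi ↦ ⟨⟨i, rfl⟩, hi⟩, And.right⟩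
  · intro h
    ext x
    constructor
    · rintro ⟨⟨i, rfl⟩, hi⟩
      exact ⟨i, (h i).1 hi, rfl⟩
    · rintro ⟨i, hi, rfl⟩
      exact ⟨⟨i, rfl⟩, (h i).2 hi⟩

theorem Fin.add_one_add_one_ne_self (k : Fin (n + 3)) : k + 1 + 1 ≠ k := by
  rw [Ne, add_assoc, add_eq_left, Fin.ext_iff, Fin.val_add, Fin.val_one, Fin.val_zero,
    Nat.mod_eq_of_lt (by omega)]
  omega

def cycleEdges [NeZero n] (f : Fin n → V) : Set (Sym2 V) := Set.range fun i ↦ s(f i, f (i + 1))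

theorem mem_range_iff_exists_mem_cycleEdges [NeZero n] {f : Fin n → V} {x : V} :
    x ∈ Set.range f ↔ ∃ e ∈ cycleEdges f, x ∈ e := by
  constructor
  · rintro ⟨i, rfl⟩
    exact ⟨_, ⟨i, rfl⟩, Sym2.mem_mk_left _ _⟩
  · rintro ⟨_, ⟨i, rfl⟩, hx⟩
    rcases Sym2.mem_iff.1 hx with rfl | rfl
    exacts [⟨i, rfl⟩, ⟨i + 1, rfl⟩]

theorem range_eq_of_cycleEdges_eq [NeZero m] [NeZero n] {f : Fin n → V} {g : Fin m → V}
    (h : cycleEdges f = cycleEdges g) : Set.range f = Set.range g := by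
  ext x
  rw [mem_range_iff_exists_mem_cycleEdges, mem_range_iff_exists_mem_cycleEdges, h]

theorem mk_mem_cycleEdges_iff [NeZero n] {f : Fin n → V} (hf : f.Injective) {i k : Fin n} :
    s(f i, f k) ∈ cycleEdges f ↔ k = i + 1 ∨ i = k + 1 := by
  simp only [cycleEdges, Set.mem_range, Sym2.eq_iff, hf.eq_iff]
  constructor
  · rintro ⟨l, ⟨rfl, rfl⟩ | ⟨rfl, rfl⟩⟩
    exacts [.inl rfl, .inr rfl]
  · rintro (rfl | rfl)
    exacts [⟨i, .inl ⟨rfl, rfl⟩⟩, ⟨k, .inr ⟨rfl, rfl⟩⟩]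

theorem injective_cycleEdge {f : Fin (n + 3) → V} (hf : f.Injective) :
    (fun i ↦ s(f i, f (i + 1))).Injective := by
  intro i k h
  rcases Sym2.eq_iff.1 h with ⟨h, -⟩ | ⟨h₁, h₂⟩
  · exact hf h
  · rw [hf h₁] at h₂
    exact absurd (hf h₂) (Fin.add_one_add_one_ne_self k)

/-- Index-wise form, faithful for injective `f`, of "the cycles traced by `f` and `g` intersect
exactly in the 2-path `f j, f (j + 1), f (j + 2)`". -/
def MeetInTwoPath [NeZero m] [NeZero n] (f : Fin n → V) (g : Fin m → V) (j : Fin n) : Prop :=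
  (∀ i, f i ∈ Set.range g ↔ i = j ∨ i = j + 1 ∨ i = j + 1 + 1) ∧
  ∀ i, s(f i, f (i + 1)) ∈ cycleEdges g ↔ i = j ∨ i = j + 1

theorem not_meetInTwoPath_self (f : Fin (n + 3) → V) (j : Fin (n + 3)) :
    ¬MeetInTwoPath f f j := by
  intro h
  rcases (h.2 (j + 1 + 1)).1 ⟨_, rfl⟩ with h | h
  · exact Fin.add_one_add_one_ne_self j h
  · simp at h

end CycleTuples

theorem twoPathSubgraph_comm {V : Type*} {G : SimpleGraph V} {u v w : V} (h₁ : G.Adj u v)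
    (h₂ : G.Adj v w) : twoPathSubgraph h₁ h₂ = twoPathSubgraph h₂.symm h₁.symm := by
  rw [twoPathSubgraph, twoPathSubgraph, SimpleGraph.subgraphOfAdj_symm h₁,
    SimpleGraph.subgraphOfAdj_symm h₂, sup_comm]

namespace SimpleGraph

variable {V : Type*} {G : SimpleGraph V} {m n : ℕ}

theorem Subgraph.eq_iff_verts_eq_and_edgeSet_eq {H H' : G.Subgraph} :
    H = H' ↔ H.verts = H'.verts ∧ H.edgeSet = H'.edgeSet := by
  refine ⟨by rintro rfl; exact ⟨rfl, rfl⟩, fun ⟨hv, he⟩ ↦ Subgraph.ext hv ?_⟩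
  ext a b
  rw [← Subgraph.mem_edgeSet, he, Subgraph.mem_edgeSet]

def cycleSubgraph [NeZero n] (G : SimpleGraph V) (f : Fin n → V) : G.Subgraph where
  verts := Set.range f
  Adj a b := G.Adj a b ∧ s(a, b) ∈ cycleEdges f
  adj_sub h := h.1
  edge_vert {a b} h := mem_range_iff_exists_mem_cycleEdges.2 ⟨_, h.2, Sym2.mem_mk_left a b⟩
  symm := ⟨fun _ _ h ↦ ⟨h.1.symm, Sym2.eq_swap ▸ h.2⟩⟩

section cycleSubgraph

variable [NeZero n] {f : Fin n → V}

@[simp]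
theorem cycleSubgraph_verts : (G.cycleSubgraph f).verts = Set.range f := rfl

@[simp]
theorem cycleSubgraph_adj {a b : V} :
    (G.cycleSubgraph f).Adj a b ↔ G.Adj a b ∧ s(a, b) ∈ cycleEdges f := Iff.rfl

theorem edgeSet_cycleSubgraph : (G.cycleSubgraph f).edgeSet = G.edgeSet ∩ cycleEdges f := by
  ext e
  induction e using Sym2.ind with | _ a b => rfl

theorem cycleEdges_subset_edgeSet (hadj : ∀ i, G.Adj (f i) (f (i + 1))) :
    cycleEdges f ⊆ G.edgeSet :=
  Set.range_subset_iff.2 hadj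

theorem cycleSubgraph_congr [NeZero m] {g : Fin m → V} (h : cycleEdges f = cycleEdges g) :
    G.cycleSubgraph f = G.cycleSubgraph g :=
  Subgraph.ext (range_eq_of_cycleEdges_eq h) (by ext a b; simp [h])

end cycleSubgraph

theorem cycleSubgraph_adj_apply_iff {f : Fin (n + 2) → V} (hf : f.Injective)
    (hadj : ∀ i, G.Adj (f i) (f (i + 1))) {i k : Fin (n + 2)} :
    (G.cycleSubgraph f).Adj (f i) (f k) ↔ (cycleGraph (n + 2)).Adj i k := by
  rw [cycleSubgraph_adj, mk_mem_cycleEdges_iff hf, cycleGraph_adj, sub_eq_iff_eq_add',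
    sub_eq_iff_eq_add', or_comm, and_iff_right_iff_imp]
  rintro (rfl | rfl)
  exacts [(hadj _).symm, hadj _]

theorem Subgraph.nonempty_iso_cycleGraph_iff {H : G.Subgraph} :
    Nonempty (H.coe ≃g cycleGraph (n + 2)) ↔ ∃ f : Fin (n + 2) → V,
      f.Injective ∧ (∀ i, G.Adj (f i) (f (i + 1))) ∧ H = G.cycleSubgraph f := by
  constructor
  · rintro ⟨e⟩
    let f : Fin (n + 2) → V := fun i ↦ e.symm i
    have hf : f.Injective := Subtype.val_injective.comp e.symm.injective
    have hH : ∀ i k, H.Adj (f i) (f k) ↔ (cycleGraph (n + 2)).Adj i k := fun _ _ ↦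
      e.symm.map_adj_iff
    have hadj : ∀ i, G.Adj (f i) (f (i + 1)) := fun i ↦
      H.adj_sub ((hH _ _).2 (cycleGraph_adj.2 (.inr (add_sub_cancel_left i 1))))
    have hverts : H.verts = Set.range f := by
      ext x
      exact ⟨fun hx ↦ ⟨e ⟨x, hx⟩, by simp [f]⟩, by rintro ⟨i, rfl⟩; exact (e.symm i).2⟩
    refine ⟨f, hf, hadj, Subgraph.ext hverts ?_⟩
    ext a b
    constructor
    · intro h
      obtain ⟨i, rfl⟩ := hverts ▸ H.edge_vert h
      obtain ⟨k, rfl⟩ := hverts ▸ H.edge_vert h.symm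
      exact (cycleSubgraph_adj_apply_iff hf hadj).2 ((hH i k).1 h)
    · intro h
      obtain ⟨i, rfl⟩ := (G.cycleSubgraph f).edge_vert h
      obtain ⟨k, rfl⟩ := (G.cycleSubgraph f).edge_vert h.symm
      exact (hH i k).2 ((cycleSubgraph_adj_apply_iff hf hadj).1 h)
  · rintro ⟨f, hf, hadj, rfl⟩
    exact ⟨Iso.symm
      { toEquiv := Equiv.ofInjective f hf
        map_rel_iff' := cycleSubgraph_adj_apply_iff hf hadj }⟩

theorem cycleSubgraph_inf_eq_twoPathSubgraph_iff [NeZero m] {f : Fin (n + 3) → V}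
    {g : Fin m → V} (hf : f.Injective) (hadj : ∀ i, G.Adj (f i) (f (i + 1))) (j : Fin (n + 3)) :
    G.cycleSubgraph f ⊓ G.cycleSubgraph g = twoPathSubgraph (hadj j) (hadj (j + 1)) ↔
      MeetInTwoPath f g j := by
  have hverts : (twoPathSubgraph (hadj j) (hadj (j + 1))).verts = f '' {j, j + 1, j + 1 + 1} := by
    ext x
    simp only [twoPathSubgraph, Subgraph.verts_sup, subgraphOfAdj_verts, Set.image_insert_eq,
      Set.image_singleton, Set.mem_union, Set.mem_insert_iff, Set.mem_singleton_iff]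
    tauto
  have hedges : (twoPathSubgraph (hadj j) (hadj (j + 1))).edgeSet =
      (fun i ↦ s(f i, f (i + 1))) '' {j, j + 1} := by
    rw [twoPathSubgraph, Subgraph.edgeSet_sup, edgeSet_subgraphOfAdj, edgeSet_subgraphOfAdj,
      Set.image_pair, Set.singleton_union]
  rw [Subgraph.eq_iff_verts_eq_and_edgeSet_eq, Subgraph.verts_inf, Subgraph.edgeSet_inf,
    hverts, hedges, cycleSubgraph_verts, cycleSubgraph_verts, edgeSet_cycleSubgraph,
    edgeSet_cycleSubgraph, Set.inter_eq_right.2 (cycleEdges_subset_edgeSet hadj),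
    ← Set.inter_assoc, Set.inter_eq_left.2 (cycleEdges_subset_edgeSet hadj), cycleEdges,
    Set.range_inter_eq_image_iff hf, Set.range_inter_eq_image_iff (injective_cycleEdge hf)]
  simp only [MeetInTwoPath, cycleEdges, Set.mem_insert_iff, Set.mem_singleton_iff]

theorem exists_twoPathSubgraph_eq [NeZero n] {f : Fin n → V} (hf : f.Injective)
    (hadj : ∀ i, G.Adj (f i) (f (i + 1))) {u v w : V} (huw : u ≠ w)
    (h₁ : (G.cycleSubgraph f).Adj u v) (h₂ : (G.cycleSubgraph f).Adj v w) :
    ∃ j, twoPathSubgraph ((G.cycleSubgraph f).adj_sub h₁) ((G.cycleSubgraph f).adj_sub h₂) =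
      twoPathSubgraph (hadj j) (hadj (j + 1)) := by
  obtain ⟨a, rfl⟩ := (G.cycleSubgraph f).edge_vert h₁
  obtain ⟨b, rfl⟩ := (G.cycleSubgraph f).edge_vert h₂
  obtain ⟨c, rfl⟩ := (G.cycleSubgraph f).edge_vert h₂.symm
  have hab := ((cycleSubgraph_adj.1 h₁).2)
  have hbc := ((cycleSubgraph_adj.1 h₂).2)
  rw [mk_mem_cycleEdges_iff hf] at hab hbc
  rcases hab with rfl | rfl <;> rcases hbc with rfl | hcb
  · exact ⟨a, rfl⟩
  · exact absurd (congrArg f (add_right_cancel hcb)) huw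
  · exact absurd rfl huw
  · subst hcb
    exact ⟨c, twoPathSubgraph_comm _ _⟩

end SimpleGraph

section Decidable

variable {V : Type*} [DecidableEq V] {m n : ℕ} [NeZero m] [NeZero n]

/- Boolean searches over `List.finRange` reduce much faster in the kernel than the instances
derived from `Fintype`. -/

instance (f : Fin n → V) (g : Fin m → V) : Decidable (cycleEdges f ⊆ cycleEdges g) :=
  decidable_of_iff ((List.finRange n).all fun i ↦ (List.finRange m).any fun k ↦
      (g k == f i && g (k + 1) == f (i + 1)) || (g k == f (i + 1) && g (k + 1) == f i)) <| by
    simp [cycleEdges, Set.range_subset_iff, List.all_eq_true, List.any_eq_true]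

instance (f : Fin n → V) (g : Fin m → V) (j : Fin n) : Decidable (MeetInTwoPath f g j) :=
  decidable_of_iff
    (((List.finRange n).all fun i ↦ decide (((List.finRange m).any fun k ↦ g k == f i) ↔
        (i == j || i == j + 1 || i == j + 1 + 1))) &&
      (List.finRange n).all fun i ↦ decide (((List.finRange m).any fun k ↦
        (g k == f i && g (k + 1) == f (i + 1)) || (g k == f (i + 1) && g (k + 1) == f i)) ↔
          (i == j || i == j + 1))) <| by
    simp [MeetInTwoPath, cycleEdges, List.all_eq_true, List.any_eq_true, -Bool.decide_or, or_assoc]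

end Decidable

open SimpleGraph

instance : DecidableRel coxeterRel := fun _ _ ↦ by unfold coxeterRel; infer_instance

instance : DecidableRel coxeterGraph.Adj := fun _ _ ↦
  decidable_of_iff' _ (fromRel_adj _ _ _)

def coxeterNeighbors : CoxeterVertex → List CoxeterVertex
  | (0, x) => [(0, x + 1), (0, x - 1), (3, x)]
  | (1, x) => [(1, x + 2), (1, x - 2), (3, x)]
  | (2, x) => [(2, x + 3), (2, x - 3), (3, x)]
  | (3, x) => [(0, x), (1, x), (2, x)]

theorem mem_coxeterNeighbors {a b : CoxeterVertex} :
    b ∈ coxeterNeighbors a ↔ coxeterGraph.Adj a b := by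
  revert a b
  decide +kernel

def coxeterHeptagons : List (Fin 7 → CoxeterVertex) := [
  ![(0, 0), (0, 1), (0, 2), (0, 3), (0, 4), (0, 5), (0, 6)],
  ![(0, 0), (0, 1), (0, 2), (3, 2), (1, 2), (1, 0), (3, 0)],
  ![(0, 0), (0, 1), (3, 1), (1, 1), (1, 6), (3, 6), (0, 6)],
  ![(0, 0), (0, 1), (3, 1), (2, 1), (2, 4), (2, 0), (3, 0)],
  ![(0, 0), (0, 6), (0, 5), (3, 5), (1, 5), (1, 0), (3, 0)],
  ![(0, 0), (0, 6), (3, 6), (2, 6), (2, 3), (2, 0), (3, 0)],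
  ![(0, 1), (0, 2), (0, 3), (3, 3), (1, 3), (1, 1), (3, 1)],
  ![(0, 1), (0, 2), (3, 2), (2, 2), (2, 5), (2, 1), (3, 1)],
  ![(0, 2), (0, 3), (0, 4), (3, 4), (1, 4), (1, 2), (3, 2)],
  ![(0, 2), (0, 3), (3, 3), (2, 3), (2, 6), (2, 2), (3, 2)],
  ![(0, 3), (0, 4), (0, 5), (3, 5), (1, 5), (1, 3), (3, 3)],
  ![(0, 3), (0, 4), (3, 4), (2, 4), (2, 0), (2, 3), (3, 3)],
  ![(0, 4), (0, 5), (0, 6), (3, 6), (1, 6), (1, 4), (3, 4)],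
  ![(0, 4), (0, 5), (3, 5), (2, 5), (2, 1), (2, 4), (3, 4)],
  ![(0, 5), (0, 6), (3, 6), (2, 6), (2, 2), (2, 5), (3, 5)],
  ![(1, 0), (1, 2), (1, 4), (1, 6), (1, 1), (1, 3), (1, 5)],
  ![(1, 0), (1, 2), (1, 4), (3, 4), (2, 4), (2, 0), (3, 0)],
  ![(1, 0), (1, 2), (3, 2), (2, 2), (2, 5), (3, 5), (1, 5)],
  ![(1, 0), (1, 5), (1, 3), (3, 3), (2, 3), (2, 0), (3, 0)],
  ![(1, 1), (1, 3), (1, 5), (3, 5), (2, 5), (2, 1), (3, 1)],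
  ![(1, 1), (1, 3), (3, 3), (2, 3), (2, 6), (3, 6), (1, 6)],
  ![(1, 1), (1, 6), (1, 4), (3, 4), (2, 4), (2, 1), (3, 1)],
  ![(1, 2), (1, 4), (1, 6), (3, 6), (2, 6), (2, 2), (3, 2)],
  ![(2, 0), (2, 3), (2, 6), (2, 2), (2, 5), (2, 1), (2, 4)]
]

theorem injective_and_adj_of_mem_coxeterHeptagons :
    ∀ t ∈ coxeterHeptagons, t.Injective ∧ ∀ i, coxeterGraph.Adj (t i) (t (i + 1)) := by
  have h : (coxeterHeptagons.all fun t ↦ (List.finRange 7).all fun i ↦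
      ((List.finRange 7).all fun k ↦ t i != t k || i == k) &&
        (coxeterNeighbors (t i)).contains (t (i + 1))) = true := by
    decide +kernel
  simp only [List.all_eq_true, List.mem_finRange, Bool.and_eq_true, Bool.or_eq_true, bne_iff_ne,
    beq_iff_eq, List.contains_iff_mem, mem_coxeterNeighbors, forall_const] at h
  exact fun t ht ↦ ⟨fun i k hik ↦ ((h t ht i).1 k).resolve_left (not_not.2 hik),
    fun i ↦ (h t ht i).2⟩

theorem coxeterHeptagons_existsUnique_meetInTwoPath :
    ∀ t ∈ coxeterHeptagons, ∀ j, ∃ g ∈ coxeterHeptagons, MeetInTwoPath t g j ∧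
      ∀ g' ∈ coxeterHeptagons, MeetInTwoPath t g' j → g' = g := by
  have h : (coxeterHeptagons.all fun t ↦ (List.finRange 7).all fun j ↦
      coxeterHeptagons.any fun g ↦ decide (MeetInTwoPath t g j) &&
        coxeterHeptagons.all fun g' ↦ decide (MeetInTwoPath t g' j → g' = g)) = true := by
    decide +kernel
  simpa [List.all_eq_true, List.any_eq_true, imp_iff_not_or] using h

theorem exists_coxeterHeptagon_cycleEdges_eq {w : Fin 7 → CoxeterVertex}
    (hw : ∀ i, coxeterGraph.Adj (w i) (w (i + 1))) :
    ∃ t ∈ coxeterHeptagons, cycleEdges w = cycleEdges t := by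
  have hdfs : ∀ a, ((coxeterNeighbors a).all fun b ↦ (coxeterNeighbors b).all fun c ↦
      (coxeterNeighbors c).all fun d ↦ (coxeterNeighbors d).all fun e ↦
      (coxeterNeighbors e).all fun x ↦ (coxeterNeighbors x).all fun y ↦
      !(coxeterNeighbors y).contains a || coxeterHeptagons.any fun t ↦
        decide (cycleEdges ![a, b, c, d, e, x, y] ⊆ cycleEdges t ∧
          cycleEdges t ⊆ cycleEdges ![a, b, c, d, e, x, y])) = true := by
    decide +kernel
  have hw' : ![w 0, w 1, w 2, w 3, w 4, w 5, w 6] = w := by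
    funext i
    fin_cases i <;> rfl
  have hnbr (i : Fin 7) : w (i + 1) ∈ coxeterNeighbors (w i) := mem_coxeterNeighbors.2 (hw i)
  have h := hdfs (w 0)
  simp only [List.all_eq_true] at h
  have := h (w 1) (hnbr 0) (w 2) (hnbr 1) (w 3) (hnbr 2) (w 4) (hnbr 3) (w 5) (hnbr 4)
    (w 6) (hnbr 5)
  have hclose : w 0 ∈ coxeterNeighbors (w 6) := hnbr 6
  simpa [hw', hclose, List.any_eq_true, Set.Subset.antisymm_iff] using this

theorem isSevenCycle_iff_exists_coxeterHeptagon {C : coxeterGraph.Subgraph} :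
    IsSevenCycle C ↔ ∃ t ∈ coxeterHeptagons, C = coxeterGraph.cycleSubgraph t := by
  rw [IsSevenCycle, Subgraph.nonempty_iso_cycleGraph_iff]
  constructor
  · rintro ⟨f, -, hadj, rfl⟩
    obtain ⟨t, ht, h⟩ := exists_coxeterHeptagon_cycleEdges_eq hadj
    exact ⟨t, ht, cycleSubgraph_congr h⟩
  · rintro ⟨t, ht, rfl⟩
    obtain ⟨hinj, hadj⟩ := injective_and_adj_of_mem_coxeterHeptagons t ht
    exact ⟨t, hinj, hadj, rfl⟩

theorem existsUnique_sevenCycle_inf_eq_twoPathSubgraph {t : Fin 7 → CoxeterVertex}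
    (ht : t ∈ coxeterHeptagons) (j : Fin 7) :
    ∃! C₁ : coxeterGraph.Subgraph, IsSevenCycle C₁ ∧ C₁ ≠ coxeterGraph.cycleSubgraph t ∧
      coxeterGraph.cycleSubgraph t ⊓ C₁ =
        twoPathSubgraph ((injective_and_adj_of_mem_coxeterHeptagons t ht).2 j)
          ((injective_and_adj_of_mem_coxeterHeptagons t ht).2 (j + 1)) := by
  obtain ⟨hinj, hadj⟩ := injective_and_adj_of_mem_coxeterHeptagons t ht
  have hmeet (g : Fin 7 → CoxeterVertex) :=
    cycleSubgraph_inf_eq_twoPathSubgraph_iff (g := g) hinj hadj j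
  obtain ⟨g, hg, hgt, huniq⟩ := coxeterHeptagons_existsUnique_meetInTwoPath t ht j
  refine ⟨coxeterGraph.cycleSubgraph g,
    ⟨isSevenCycle_iff_exists_coxeterHeptagon.2 ⟨g, hg, rfl⟩, fun h ↦ ?_, (hmeet g).2 hgt⟩, ?_⟩
  · have hself := (hmeet g).2 hgt
    rw [h, hmeet] at hself
    exact not_meetInTwoPath_self t j hself
  · rintro C₁ ⟨hC₁, -, hinter⟩
    obtain ⟨g', hg', rfl⟩ := isSevenCycle_iff_exists_coxeterHeptagon.1 hC₁
    rw [huniq g' hg' ((hmeet g').1 hinter)]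

/-- The Coxeter graph is a tightly fastened `{C₇}_{P₃}`-ultrahomogeneous graph:
for every 7-cycle `C₀` and every 2-path `u – v – w` contained in `C₀` there is
exactly one 7-cycle `C₁ ≠ C₀` whose intersection with `C₀` (on vertices and on
edges alike) is exactly that 2-path. -/
theorem coxeterGraph_tightly_fastened_sevenCycles_over_twoPaths
    (C₀ : coxeterGraph.Subgraph) (hC₀ : IsSevenCycle C₀)
    (u v w : CoxeterVertex) (huw : u ≠ w)
    (h₁ : C₀.Adj u v) (h₂ : C₀.Adj v w) :
    ∃! C₁ : coxeterGraph.Subgraph, IsSevenCycle C₁ ∧ C₁ ≠ C₀ ∧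
      C₀ ⊓ C₁ = twoPathSubgraph (C₀.adj_sub h₁) (C₀.adj_sub h₂) := by
  obtain ⟨t, ht, rfl⟩ := isSevenCycle_iff_exists_coxeterHeptagon.1 hC₀
  obtain ⟨hinj, hadj⟩ := injective_and_adj_of_mem_coxeterHeptagons t ht
  obtain ⟨j, hj⟩ := exists_twoPathSubgraph_eq hinj hadj huw h₁ h₂
  rw [hj]
  exact existsUnique_sevenCycle_inf_eq_twoPathSubgraph ht j
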